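/- arXiv:1511.02366 — 4 statements merged into one kernel-verified Lean document; each statement's English description precedes it below -/
import Mathlib

section
/- Let k > 1 be a real number and let g : (0,1) → ℝ be weakly differentiable with ∫₀¹ s^k (g(s)² + g'(s)²) ds < ∞. Then there exists a constant C > 0, depending only on k, such that ∫₀¹ s^{k−2} g(s)² ds ≤ C ∫₀¹ s^k (g(s)² + g'(s)²) ds. -/
/-!
The derivative of `s ^ (k - 1) * g s ^ 2` is `(k - 1) s^(k-2) g² + 2 s^(k-1) g g'`, and by AM–GM
the cross term is at least `-((k - 1) / 2) s^(k-2) g² - (2 / (k - 1)) s^k g'²`. Integrating over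
`[ε, a]` and discarding the (nonnegative) boundary term at `ε` bounds `∫_ε^a s^(k-2) g²` by
`a^(k-1) g(a)²` and `∫ s^k g'²`, uniformly in `ε`, so the bound passes to `(0, a]`. The point
`a ∈ (1/2, 1)` is chosen where `s^(k-1) g²` is at most its mean over `(1/2, 1)`, which is
controlled by `∫ s^k g²`; on `(a, 1)` the weights `s^(k-2)` and `s^k` are comparable.
-/

open MeasureTheory Set Filter

lemma rpow_sub_natCast_le_two_pow_mul_rpow {s : ℝ} (k : ℝ) (hs : 1 / 2 ≤ s) (n : ℕ) :
    s ^ (k - n) ≤ 2 ^ n * s ^ k := by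
  have hs0 : 0 < s := one_half_pos.trans_le hs
  have hinv : (s ^ n)⁻¹ ≤ 2 ^ n := inv_le_of_inv_le₀ (by positivity)
    (by simpa [inv_pow] using pow_le_pow_left₀ (by norm_num) hs n)
  rw [Real.rpow_sub_natCast hs0.ne', div_eq_inv_mul]
  exact mul_le_mul_of_nonneg_right hinv (Real.rpow_nonneg hs0.le k)

lemma continuousOn_rpow_mul_sq {g : ℝ → ℝ} {S : Set ℝ} (p : ℝ) (hS : S ⊆ Ioi 0)
    (hg : ContinuousOn g S) : ContinuousOn (fun x => x ^ p * g x ^ 2) S :=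
  (continuousOn_id.rpow_const fun _ hx => Or.inl (hS hx).ne').fun_mul (hg.fun_pow 2)

lemma aestronglyMeasurable_of_hasDerivAt {μ : Measure ℝ} {g g' : ℝ → ℝ} {S : Set ℝ}
    (hS : MeasurableSet S) (hg : ∀ x ∈ S, HasDerivAt g (g' x) x) :
    AEStronglyMeasurable g' (μ.restrict S) :=
  (measurable_deriv g).aestronglyMeasurable.congr
    (ae_restrict_of_forall_mem hS fun x hx => (hg x hx).deriv)

lemma integrableOn_rpow_mul_sq_of_add {k : ℝ} {x y : ℝ → ℝ} {S : Set ℝ} (hS : MeasurableSet S)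
    (hS0 : S ⊆ Ici 0) (hx : AEStronglyMeasurable x (volume.restrict S))
    (h : IntegrableOn (fun s => s ^ k * (x s ^ 2 + y s ^ 2)) S) :
    IntegrableOn (fun s => s ^ k * x s ^ 2) S :=
  h.mono' ((measurable_id.pow_const k).aestronglyMeasurable.mul (hx.pow 2))
    (ae_restrict_of_forall_mem hS fun s hs => by
      have hsk : 0 ≤ s ^ k := Real.rpow_nonneg (hS0 hs) k
      rw [Real.norm_of_nonneg (by positivity)]
      nlinarith [sq_nonneg (y s)])

lemma setIntegral_rpow_mul_sq_mono_set {k : ℝ} {x : ℝ → ℝ} {S T : Set ℝ} (hT : MeasurableSet T)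
    (hT0 : T ⊆ Ici 0) (hST : S ⊆ T) (hx : IntegrableOn (fun s => s ^ k * x s ^ 2) T) :
    ∫ s in S, s ^ k * x s ^ 2 ≤ ∫ s in T, s ^ k * x s ^ 2 :=
  setIntegral_mono_set hx (ae_restrict_of_forall_mem hT fun _ hs =>
    mul_nonneg (Real.rpow_nonneg (hT0 hs) k) (sq_nonneg _)) hST.eventuallyLE

lemma integrableOn_rpow_sub_natCast_mul_sq {k : ℝ} {g : ℝ → ℝ} {S : Set ℝ}
    (hS : MeasurableSet S) (hS' : S ⊆ Ici (1 / 2)) (n : ℕ) (hg : ContinuousOn g S)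
    (hw : IntegrableOn (fun s => s ^ k * g s ^ 2) S) :
    IntegrableOn (fun s => s ^ (k - n) * g s ^ 2) S ∧
      ∫ s in S, s ^ (k - n) * g s ^ 2 ≤ 2 ^ n * ∫ s in S, s ^ k * g s ^ 2 := by
  have hpos : S ⊆ Ioi 0 := fun s hs => mem_Ioi.2 (one_half_pos.trans_le (hS' hs))
  have hle : ∀ s ∈ S, s ^ (k - n) * g s ^ 2 ≤ 2 ^ n * (s ^ k * g s ^ 2) := fun s hs => by
    rw [← mul_assoc]
    exact mul_le_mul_of_nonneg_right (rpow_sub_natCast_le_two_pow_mul_rpow k (hS' hs) n)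
      (sq_nonneg _)
  have hint : IntegrableOn (fun s => s ^ (k - n) * g s ^ 2) S :=
    (hw.const_mul _).mono' ((continuousOn_rpow_mul_sq _ hpos hg).aestronglyMeasurable hS)
      (ae_restrict_of_forall_mem hS fun s hs => by
        rw [Real.norm_of_nonneg (mul_nonneg (Real.rpow_nonneg (hpos hs).le _) (sq_nonneg _))]
        exact hle s hs)
  refine ⟨hint, ?_⟩
  rw [← integral_const_mul]
  exact setIntegral_mono_on hint (hw.const_mul _) hS hle

lemma integrableOn_Ioc_of_forall_intervalIntegral_le {f : ℝ → ℝ} {a b M : ℝ} (hab : a < b)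
    (hf : ∀ x ∈ Ioc a b, 0 ≤ f x) (hfi : ∀ ε ∈ Ioo a b, IntegrableOn f (Icc ε b))
    (hM : ∀ ε ∈ Ioo a b, ∫ x in ε..b, f x ≤ M) : IntegrableOn f (Ioc a b) := by
  obtain ⟨u, -, hu, hlim⟩ := exists_seq_strictAnti_tendsto' hab
  refine integrableOn_Ioc_of_intervalIntegral_norm_bounded_left (I := M)
    (fun n => (hfi _ (hu n)).mono_set Ioc_subset_Icc_self) hlim (Eventually.of_forall fun n => ?_)
  have hsub : Ioc (u n) b ⊆ Ioc a b := Ioc_subset_Ioc_left (hu n).1.le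
  rw [setIntegral_congr_fun measurableSet_Ioc fun x hx => Real.norm_of_nonneg (hf x (hsub hx)),
    ← intervalIntegral.integral_of_le (hu n).2.le]
  exact hM _ (hu n)

lemma setIntegral_Ioc_le_of_forall_intervalIntegral_le {f : ℝ → ℝ} {a b M : ℝ} (hab : a < b)
    (hf : IntegrableOn f (Ioc a b)) (hM : ∀ ε ∈ Ioo a b, ∫ x in ε..b, f x ≤ M) :
    ∫ x in Ioc a b, f x ≤ M := by
  have hcont : ContinuousOn (fun x => ∫ t in x..b, f t) (Icc a b) := by
    rw [← uIcc_of_le hab.le]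
    exact intervalIntegral.continuousOn_primitive_interval_left
      (by rwa [uIcc_of_le hab.le, integrableOn_Icc_iff_integrableOn_Ioc])
  have := left_nhdsWithin_Ioo_neBot hab
  rw [← intervalIntegral.integral_of_le hab.le]
  exact le_of_tendsto ((hcont a (left_mem_Icc.2 hab.le)).mono Ioo_subset_Icc_self)
    (eventually_nhdsWithin_of_forall hM)

lemma hardy_pointwise_le {k s : ℝ} (hk : 1 < k) (hs : 0 < s) (x y : ℝ) :
    (k - 1) / 2 * (s ^ (k - 2) * x ^ 2) - 2 / (k - 1) * (s ^ k * y ^ 2) ≤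
      (k - 1) * s ^ (k - 2) * x ^ 2 + 2 * s ^ (k - 1) * (x * y) := by
  -- AM–GM: with `λ = (k - 1) / 2`, the gap is `s ^ (k - 2) / λ * (λ x + s y) ^ 2`.
  have hk1 : 0 < k - 1 := by linarith
  have h1 : s ^ (k - 1) = s ^ (k - 2) * s := by
    rw [← Real.rpow_add_one hs.ne']; ring_nf
  have h2 : s ^ k = s ^ (k - 2) * s ^ 2 := by
    rw [← Real.rpow_add_natCast hs.ne']; norm_num
  rw [h1, h2, ← sub_nonneg]
  have key : (k - 1) * s ^ (k - 2) * x ^ 2 + 2 * (s ^ (k - 2) * s) * (x * y) -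
      ((k - 1) / 2 * (s ^ (k - 2) * x ^ 2) - 2 / (k - 1) * (s ^ (k - 2) * s ^ 2 * y ^ 2)) =
      2 / (k - 1) * s ^ (k - 2) * ((k - 1) / 2 * x + s * y) ^ 2 := by
    field_simp; ring
  rw [key]; positivity

lemma hasDerivAt_rpow_sub_one_mul_sq {k s : ℝ} {g : ℝ → ℝ} {g' : ℝ} (hs : 0 < s)
    (hg : HasDerivAt g g' s) :
    HasDerivAt (fun t => t ^ (k - 1) * g t ^ 2)
      ((k - 1) * s ^ (k - 2) * g s ^ 2 + 2 * s ^ (k - 1) * (g s * g')) s := by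
  have h := (Real.hasDerivAt_rpow_const (p := k - 1) (Or.inl hs.ne')).mul (hg.fun_pow 2)
  rw [show k - 1 - 1 = k - 2 by ring] at h
  exact h.congr_deriv (by push_cast; ring)

theorem hardy_intervalIntegral_le {k ε a : ℝ} {g g' : ℝ → ℝ} (hk : 1 < k) (hε : 0 < ε)
    (hεa : ε ≤ a) (hg : ∀ s ∈ Icc ε a, HasDerivAt g (g' s) s)
    (hg' : IntegrableOn (fun s => s ^ k * g' s ^ 2) (Icc ε a)) :
    ∫ s in ε..a, s ^ (k - 2) * g s ^ 2 ≤
      2 / (k - 1) * (a ^ (k - 1) * g a ^ 2) +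
        (2 / (k - 1)) ^ 2 * ∫ s in ε..a, s ^ k * g' s ^ 2 := by
  have hpos : Icc ε a ⊆ Ioi 0 := fun s hs => hε.trans_le hs.1
  have hgc : ContinuousOn g (Icc ε a) := fun s hs => (hg s hs).continuousAt.continuousWithinAt
  have hf : IntegrableOn (fun s => s ^ (k - 2) * g s ^ 2) (Icc ε a) :=
    (continuousOn_rpow_mul_sq _ hpos hgc).integrableOn_Icc
  have hFTC := intervalIntegral.integral_le_sub_of_hasDeriv_right_of_le hεa
    (continuousOn_rpow_mul_sq _ hpos hgc)
    (fun s hs => (hasDerivAt_rpow_sub_one_mul_sq (hpos (Ioo_subset_Icc_self hs))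
      (hg s (Ioo_subset_Icc_self hs))).hasDerivWithinAt)
    ((hf.const_mul ((k - 1) / 2)).sub' (hg'.const_mul (2 / (k - 1))))
    (fun s hs => hardy_pointwise_le hk (hpos (Ioo_subset_Icc_self hs)) _ _)
  rw [intervalIntegral.integral_sub
    ((intervalIntegrable_iff_integrableOn_Icc_of_le hεa).2 (hf.const_mul _))
    ((intervalIntegrable_iff_integrableOn_Icc_of_le hεa).2 (hg'.const_mul _)),
    intervalIntegral.integral_const_mul, intervalIntegral.integral_const_mul] at hFTC
  have hk1 : 0 < k - 1 := by linarith
  have hc : 2 / (k - 1) * ((k - 1) / 2) = 1 := by field_simp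
  have hc0 : 0 ≤ 2 / (k - 1) := by positivity
  have h := mul_le_mul_of_nonneg_left hFTC hc0
  rw [mul_sub, ← mul_assoc, hc, one_mul] at h
  have hε_term : 0 ≤ 2 / (k - 1) * (ε ^ (k - 1) * g ε ^ 2) := by positivity
  linarith

theorem hardy_Ioc {k a : ℝ} {g g' : ℝ → ℝ} (hk : 1 < k) (ha : 0 < a)
    (hg : ∀ s ∈ Ioc 0 a, HasDerivAt g (g' s) s)
    (hg' : IntegrableOn (fun s => s ^ k * g' s ^ 2) (Ioc 0 a)) :
    IntegrableOn (fun s => s ^ (k - 2) * g s ^ 2) (Ioc 0 a) ∧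
      ∫ s in Ioc 0 a, s ^ (k - 2) * g s ^ 2 ≤
        2 / (k - 1) * (a ^ (k - 1) * g a ^ 2) +
          (2 / (k - 1)) ^ 2 * ∫ s in Ioc 0 a, s ^ k * g' s ^ 2 := by
  have hsub : ∀ ε ∈ Ioo 0 a, Icc ε a ⊆ Ioc 0 a := fun ε hε s hs => ⟨hε.1.trans_le hs.1, hs.2⟩
  have hbound : ∀ ε ∈ Ioo 0 a, ∫ s in ε..a, s ^ (k - 2) * g s ^ 2 ≤
      2 / (k - 1) * (a ^ (k - 1) * g a ^ 2) +
        (2 / (k - 1)) ^ 2 * ∫ s in Ioc 0 a, s ^ k * g' s ^ 2 := by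
    intro ε hε
    refine (hardy_intervalIntegral_le hk hε.1 hε.2.le (fun s hs => hg s (hsub ε hε hs))
      (hg'.mono_set (hsub ε hε))).trans ?_
    rw [intervalIntegral.integral_of_le hε.2.le]
    gcongr
    · exact ae_restrict_of_forall_mem measurableSet_Ioc fun s hs =>
        mul_nonneg (Real.rpow_nonneg hs.1.le _) (sq_nonneg _)
    · exact hε.1.le
  have hint := integrableOn_Ioc_of_forall_intervalIntegral_le ha
    (fun s hs => mul_nonneg (Real.rpow_nonneg hs.1.le _) (sq_nonneg _))
    (fun ε hε => (continuousOn_rpow_mul_sq _ (fun s hs => hε.1.trans_le hs.1)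
      fun s hs => (hg s (hsub ε hε hs)).continuousAt.continuousWithinAt).integrableOn_Icc)
    hbound
  exact ⟨hint, setIntegral_Ioc_le_of_forall_intervalIntegral_le ha hint hbound⟩

lemma exists_mem_Ioo_rpow_sub_one_mul_sq_le {k : ℝ} {g : ℝ → ℝ}
    (hg : ContinuousOn g (Ioo (1 / 2) 1))
    (hw : IntegrableOn (fun s => s ^ k * g s ^ 2) (Ioo (1 / 2) 1)) :
    ∃ a ∈ Ioo (1 / 2 : ℝ) 1, a ^ (k - 1) * g a ^ 2 ≤ 4 * ∫ s in Ioo (1 / 2) 1, s ^ k * g s ^ 2 := by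
  obtain ⟨hint, hle⟩ :=
    integrableOn_rpow_sub_natCast_mul_sq measurableSet_Ioo (fun s hs => hs.1.le) 1 hg hw
  simp only [Nat.cast_one, pow_one] at hint hle
  obtain ⟨a, ha, hav⟩ := exists_le_setAverage (by norm_num) (by simp) hint
  refine ⟨a, ha, hav.trans ?_⟩
  rw [setAverage_eq, Real.volume_real_Ioo_of_le (by norm_num), smul_eq_mul]
  linarith

theorem hardy_Ioo_zero_one {k : ℝ} {g g' : ℝ → ℝ} (hk : 1 < k)
    (hg : ∀ s ∈ Ioo (0 : ℝ) 1, HasDerivAt g (g' s) s)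
    (hw : IntegrableOn (fun s => s ^ k * g s ^ 2) (Ioo 0 1))
    (hv : IntegrableOn (fun s => s ^ k * g' s ^ 2) (Ioo 0 1)) :
    ∫ s in Ioo (0 : ℝ) 1, s ^ (k - 2) * g s ^ 2 ≤
      4 * (2 / (k - 1) + 1) * (∫ s in Ioo (0 : ℝ) 1, s ^ k * g s ^ 2) +
        (2 / (k - 1)) ^ 2 * ∫ s in Ioo (0 : ℝ) 1, s ^ k * g' s ^ 2 := by
  have hc : 0 ≤ 2 / (k - 1) := div_nonneg zero_le_two (by linarith)
  have hnonneg : Ioo (0 : ℝ) 1 ⊆ Ici 0 := fun s hs => hs.1.le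
  have hgc : ContinuousOn g (Ioo 0 1) := fun s hs => (hg s hs).continuousAt.continuousWithinAt
  have hhalf : Ioo (1 / 2 : ℝ) 1 ⊆ Ioo 0 1 := Ioo_subset_Ioo_left one_half_pos.le
  obtain ⟨a, ha, hga⟩ := exists_mem_Ioo_rpow_sub_one_mul_sq_le (hgc.mono hhalf) (hw.mono_set hhalf)
  have ha0 : 0 < a := one_half_pos.trans ha.1
  have hIoc : Ioc 0 a ⊆ Ioo (0 : ℝ) 1 := Ioc_subset_Ioo_right ha.2
  have hIoo : Ioo a 1 ⊆ Ioo (0 : ℝ) 1 := Ioo_subset_Ioo_left ha0.le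
  obtain ⟨hint₀, hle₀⟩ := hardy_Ioc hk ha0 (fun s hs => hg s (hIoc hs)) (hv.mono_set hIoc)
  obtain ⟨hint₁, hle₁⟩ := integrableOn_rpow_sub_natCast_mul_sq measurableSet_Ioo
    (fun s hs => (ha.1.trans hs.1).le) 2 (hgc.mono hIoo) (hw.mono_set hIoo)
  rw [Nat.cast_ofNat] at hint₁ hle₁
  have hsplit : ∫ s in Ioo (0 : ℝ) 1, s ^ (k - 2) * g s ^ 2 =
      (∫ s in Ioc 0 a, s ^ (k - 2) * g s ^ 2) + ∫ s in Ioo a 1, s ^ (k - 2) * g s ^ 2 := by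
    rw [← Ioc_union_Ioo_eq_Ioo ha0.le ha.2]
    exact setIntegral_union (Ioc_disjoint_Ioi_same.mono_right Ioo_subset_Ioi_self)
      measurableSet_Ioo hint₀ hint₁
  have hw_half := setIntegral_rpow_mul_sq_mono_set measurableSet_Ioo hnonneg hhalf hw
  have hw_tail := setIntegral_rpow_mul_sq_mono_set measurableSet_Ioo hnonneg hIoo hw
  have hv_Ioc := setIntegral_rpow_mul_sq_mono_set measurableSet_Ioo hnonneg hIoc hv
  rw [hsplit]
  nlinarith [mul_le_mul_of_nonneg_left hga hc, mul_le_mul_of_nonneg_left hw_half hc,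
    mul_le_mul_of_nonneg_left hv_Ioc (sq_nonneg (2 / (k - 1)))]

/-- Hardy inequality, first case (`k > 1`): for a weakly differentiable function `g` on `(0,1)`
with `∫₀¹ s^k (g² + g'²) ds < ∞`, one has
`∫₀¹ s^{k-2} g² ds ≤ C ∫₀¹ s^k (g² + g'²) ds` with `C` depending only on `k`. -/
theorem hardy_inequality_k_gt_one (k : ℝ) (hk : 1 < k) :
    ∃ C : ℝ, 0 < C ∧ ∀ g g' : ℝ → ℝ,
      (∀ s ∈ Ioo (0:ℝ) 1, HasDerivAt g (g' s) s) →
      IntegrableOn (fun s => s ^ k * ((g s) ^ 2 + (g' s) ^ 2)) (Ioo (0:ℝ) 1) →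
      ∫ s in Ioo (0:ℝ) 1, s ^ (k - 2) * (g s) ^ 2 ≤
        C * ∫ s in Ioo (0:ℝ) 1, s ^ k * ((g s) ^ 2 + (g' s) ^ 2) := by
  have hc : 0 ≤ 2 / (k - 1) := div_nonneg zero_le_two (by linarith)
  refine ⟨(2 / (k - 1) + 2) ^ 2, by positivity, fun g g' hg hu => ?_⟩
  have hnonneg : Ioo (0 : ℝ) 1 ⊆ Ici 0 := fun s hs => hs.1.le
  have hw := integrableOn_rpow_mul_sq_of_add measurableSet_Ioo hnonneg
    (ContinuousOn.aestronglyMeasurable (fun s hs => (hg s hs).continuousAt.continuousWithinAt)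
      measurableSet_Ioo) hu
  have hv := integrableOn_rpow_mul_sq_of_add (y := g) measurableSet_Ioo hnonneg
    (aestronglyMeasurable_of_hasDerivAt measurableSet_Ioo hg)
    (hu.congr_fun (fun s _ => by ring) measurableSet_Ioo)
  have hw₀ : 0 ≤ ∫ s in Ioo (0 : ℝ) 1, s ^ k * g s ^ 2 := setIntegral_nonneg measurableSet_Ioo
    fun s hs => mul_nonneg (Real.rpow_nonneg hs.1.le k) (sq_nonneg _)
  have hv₀ : 0 ≤ ∫ s in Ioo (0 : ℝ) 1, s ^ k * g' s ^ 2 := setIntegral_nonneg measurableSet_Ioo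
    fun s hs => mul_nonneg (Real.rpow_nonneg hs.1.le k) (sq_nonneg _)
  calc ∫ s in Ioo (0 : ℝ) 1, s ^ (k - 2) * g s ^ 2
      ≤ 4 * (2 / (k - 1) + 1) * (∫ s in Ioo (0 : ℝ) 1, s ^ k * g s ^ 2) +
          (2 / (k - 1)) ^ 2 * ∫ s in Ioo (0 : ℝ) 1, s ^ k * g' s ^ 2 :=
        hardy_Ioo_zero_one hk hg hw hv
    _ ≤ (2 / (k - 1) + 2) ^ 2 *
          ((∫ s in Ioo (0 : ℝ) 1, s ^ k * g s ^ 2) + ∫ s in Ioo (0 : ℝ) 1, s ^ k * g' s ^ 2) := by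
        nlinarith [mul_nonneg (sq_nonneg (2 / (k - 1))) hw₀, mul_nonneg hc hv₀]
    _ = (2 / (k - 1) + 2) ^ 2 * ∫ s in Ioo (0 : ℝ) 1, s ^ k * (g s ^ 2 + g' s ^ 2) := by
        simp only [mul_add, integral_add hw hv]
end

section
/- Let k < 1 be a real number and let g : (0,1) → ℝ be weakly differentiable with ∫₀¹ s^k (g(s)² + g'(s)²) ds < ∞. Then g has a trace at s = 0, i.e. the limit g(0) := lim_{s→0⁺} g(s) exists, and there exists a constant C > 0, depending only on k, such that ∫₀¹ s^{k−2} (g(s) − g(0))² ds ≤ C ∫₀¹ s^k g'(s)² ds. -/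
open MeasureTheory Set Filter Topology Function
open scoped ENNReal

/-!
Writing `g s - g0 = ∫ t in 0..s, g' t`, Cauchy–Schwarz with the weight `t ^ ((k + 1) / 2)` gives
`s ^ (k - 2) (g s - g0)² ≤ 2 / (1 - k) · s ^ ((k - 3) / 2) ∫₀ˢ t ^ ((k + 1) / 2) g'²`.
Integrating in `s` and exchanging the order of integration, the inner integral
`∫ₜ¹ s ^ ((k - 3) / 2) ds ≤ 2 / (1 - k) · t ^ ((k - 1) / 2)` turns the weight back into `t ^ k`,
with total constant `4 / (1 - k)²`. The trace exists because `g'` is integrable near `0`: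
`2 |g'| ≤ s ^ k g'² + s ^ (-k)`, and `s ^ (-k)` is integrable since `k < 1`.
-/

theorem ofReal_rpow_mul_ofReal_rpow {t : ℝ} (ht : 0 < t) (a b : ℝ) :
    ENNReal.ofReal (t ^ a) * ENNReal.ofReal (t ^ b) = ENNReal.ofReal (t ^ (a + b)) := by
  rw [← ENNReal.ofReal_mul (Real.rpow_nonneg ht.le a), Real.rpow_add ht]

theorem ofReal_sq_eq_enorm_sq (x : ℝ) : ENNReal.ofReal (x ^ 2) = ‖x‖ₑ ^ 2 := by
  rw [Real.enorm_eq_ofReal_abs, ← ENNReal.ofReal_pow (abs_nonneg x), sq_abs]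

theorem sq_lintegral_mul_le {α : Type*} [MeasurableSpace α] (μ : Measure α)
    {F G : α → ℝ≥0∞} (hF : AEMeasurable F μ) (hG : AEMeasurable G μ) :
    (∫⁻ x, F x * G x ∂μ) ^ 2 ≤ (∫⁻ x, F x ^ 2 ∂μ) * ∫⁻ x, G x ^ 2 ∂μ := by
  have holder := ENNReal.lintegral_mul_le_Lp_mul_Lq μ Real.HolderConjugate.two_two hF hG
  have hsq : ∀ z : ℝ≥0∞, (z ^ (1 / 2 : ℝ)) ^ 2 = z := fun z => by
    rw [← ENNReal.rpow_mul_natCast]; norm_num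
  calc (∫⁻ x, F x * G x ∂μ) ^ 2
      ≤ ((∫⁻ x, F x ^ (2 : ℝ) ∂μ) ^ (1 / 2 : ℝ) *
          (∫⁻ x, G x ^ (2 : ℝ) ∂μ) ^ (1 / 2 : ℝ)) ^ 2 :=
        pow_le_pow_left' holder 2
    _ = (∫⁻ x, F x ^ 2 ∂μ) * ∫⁻ x, G x ^ 2 ∂μ := by
        simp only [mul_pow, hsq, ENNReal.rpow_two]

theorem lintegral_Ioo_rpow {c s : ℝ} (hc : -1 < c) (hs : 0 < s) :
    ∫⁻ t in Ioo 0 s, ENNReal.ofReal (t ^ c) = ENNReal.ofReal (s ^ (c + 1) / (c + 1)) := by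
  rw [← ofReal_integral_eq_lintegral_ofReal ((intervalIntegral.integrableOn_Ioo_rpow_iff hs).2 hc)
    ((ae_restrict_iff' measurableSet_Ioo).2 (.of_forall fun t ht => Real.rpow_nonneg ht.1.le c)),
    ← integral_Ioc_eq_integral_Ioo, ← intervalIntegral.integral_of_le hs.le,
    integral_rpow (Or.inl hc), Real.zero_rpow (by linarith), sub_zero]

theorem lintegral_Ioi_rpow {c t : ℝ} (hc : c < -1) (ht : 0 < t) :
    ∫⁻ s in Ioi t, ENNReal.ofReal (s ^ c) = ENNReal.ofReal (-t ^ (c + 1) / (c + 1)) := by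
  rw [← ofReal_integral_eq_lintegral_ofReal (integrableOn_Ioi_rpow_of_lt hc ht)
    ((ae_restrict_iff' measurableSet_Ioi).2 (.of_forall fun s hs =>
      Real.rpow_nonneg (ht.trans hs).le c)), integral_Ioi_rpow_of_lt hc ht]

theorem sq_lintegral_Ioo_le {α s : ℝ} (hα : α < 1) (hs : 0 < s) {F : ℝ → ℝ≥0∞}
    (hF : AEMeasurable F (volume.restrict (Ioo 0 s))) :
    (∫⁻ t in Ioo 0 s, F t) ^ 2 ≤
      (∫⁻ t in Ioo 0 s, ENNReal.ofReal (t ^ α) * F t ^ 2) *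
        ENNReal.ofReal (s ^ (1 - α) / (1 - α)) := by
  have hsplit : ∀ t ∈ Ioo 0 s,
      F t = ENNReal.ofReal (t ^ (α / 2)) * F t * ENNReal.ofReal (t ^ (-α / 2)) := fun t ht => by
    rw [mul_right_comm, ofReal_rpow_mul_ofReal_rpow ht.1, ← add_div, add_neg_cancel, zero_div,
      Real.rpow_zero, ENNReal.ofReal_one, one_mul]
  calc (∫⁻ t in Ioo 0 s, F t) ^ 2
      = (∫⁻ t in Ioo 0 s,
          ENNReal.ofReal (t ^ (α / 2)) * F t * ENNReal.ofReal (t ^ (-α / 2))) ^ 2 := by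
        rw [setLIntegral_congr_fun measurableSet_Ioo hsplit]
    _ ≤ (∫⁻ t in Ioo 0 s, (ENNReal.ofReal (t ^ (α / 2)) * F t) ^ 2) *
          ∫⁻ t in Ioo 0 s, ENNReal.ofReal (t ^ (-α / 2)) ^ 2 :=
        sq_lintegral_mul_le _ (by fun_prop) (by fun_prop)
    _ = (∫⁻ t in Ioo 0 s, ENNReal.ofReal (t ^ α) * F t ^ 2) *
          ∫⁻ t in Ioo 0 s, ENNReal.ofReal (t ^ (-α)) := by
        congr 1 <;> refine setLIntegral_congr_fun measurableSet_Ioo fun t ht => ?_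
        · rw [mul_pow, sq (ENNReal.ofReal _), ofReal_rpow_mul_ofReal_rpow ht.1, add_halves]
        · rw [sq, ofReal_rpow_mul_ofReal_rpow ht.1, add_halves]
    _ = _ := by rw [lintegral_Ioo_rpow (by linarith) hs, neg_add_eq_sub]

theorem lintegral_Ioo_mul_lintegral_Ioo_swap {a b : ℝ} {φ G : ℝ → ℝ≥0∞}
    (hφ : AEMeasurable φ (volume.restrict (Ioo a b)))
    (hG : AEMeasurable G (volume.restrict (Ioo a b))) :
    ∫⁻ s in Ioo a b, φ s * ∫⁻ t in Ioo a s, G t =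
      ∫⁻ t in Ioo a b, G t * ∫⁻ s in Ioo t b, φ s := by
  set μ := volume.restrict (Ioo a b)
  have hmeas : AEMeasurable
      (uncurry fun s t => (Iio s).indicator (fun t => φ s * G t) t) (μ.prod μ) := by
    have : (uncurry fun s t => (Iio s).indicator (fun t => φ s * G t) t) =
        {p : ℝ × ℝ | p.2 < p.1}.indicator fun p => φ p.1 * G p.2 := by
      ext p; simp [uncurry, indicator_apply]
    rw [this]
    exact (hφ.comp_fst.mul hG.comp_snd).indicator (measurableSet_lt measurable_snd measurable_fst)
  calc ∫⁻ s in Ioo a b, φ s * ∫⁻ t in Ioo a s, G t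
      = ∫⁻ s, ∫⁻ t, (Iio s).indicator (fun t => φ s * G t) t ∂μ ∂μ := by
        refine setLIntegral_congr_fun measurableSet_Ioo fun s hs => ?_
        rw [lintegral_indicator measurableSet_Iio, Measure.restrict_restrict measurableSet_Iio,
          Iio_inter_Ioo, min_eq_left hs.2.le,
          lintegral_const_mul'' _ (hG.mono_set (Ioo_subset_Ioo_right hs.2.le))]
    _ = ∫⁻ t, ∫⁻ s, (Ioi t).indicator (fun s => φ s * G t) s ∂μ ∂μ := by
        rw [lintegral_lintegral_swap hmeas]
        simp only [indicator_apply, mem_Iio, mem_Ioi]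
    _ = ∫⁻ t in Ioo a b, G t * ∫⁻ s in Ioo t b, φ s := by
        refine setLIntegral_congr_fun measurableSet_Ioo fun t ht => ?_
        rw [lintegral_indicator measurableSet_Ioi, Measure.restrict_restrict measurableSet_Ioi,
          Ioi_inter_Ioo, max_eq_left ht.1.le,
          lintegral_mul_const'' _ (hφ.mono_set (Ioo_subset_Ioo_left ht.1.le)), mul_comm]

theorem rpow_mul_sq_lintegral_Ioo_le {k s : ℝ} (hk : k < 1) (hs : 0 < s) {F : ℝ → ℝ≥0∞}
    (hF : AEMeasurable F (volume.restrict (Ioo 0 s))) :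
    ENNReal.ofReal (s ^ (k - 2)) * (∫⁻ t in Ioo 0 s, F t) ^ 2 ≤
      ENNReal.ofReal (2 / (1 - k)) * (ENNReal.ofReal (s ^ ((k - 3) / 2)) *
        ∫⁻ t in Ioo 0 s, ENNReal.ofReal (t ^ ((k + 1) / 2)) * F t ^ 2) := by
  calc ENNReal.ofReal (s ^ (k - 2)) * (∫⁻ t in Ioo 0 s, F t) ^ 2
      ≤ ENNReal.ofReal (s ^ (k - 2)) *
          ((∫⁻ t in Ioo 0 s, ENNReal.ofReal (t ^ ((k + 1) / 2)) * F t ^ 2) *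
            ENNReal.ofReal (s ^ (1 - (k + 1) / 2) / (1 - (k + 1) / 2))) := by
        gcongr
        exact sq_lintegral_Ioo_le (by linarith) hs hF
    _ = _ := by
        rw [show 1 - (k + 1) / 2 = (1 - k) / 2 by ring, div_div_eq_mul_div, mul_comm,
          mul_div_assoc, ENNReal.ofReal_mul (Real.rpow_nonneg hs.le _),
          show (k - 3) / 2 = (1 - k) / 2 + (k - 2) by ring, ← ofReal_rpow_mul_ofReal_rpow hs]
        ring

theorem lintegral_Ioo_rpow_le {k t : ℝ} (hk : k < 1) (ht : 0 < t) (b : ℝ) :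
    ∫⁻ s in Ioo t b, ENNReal.ofReal (s ^ ((k - 3) / 2)) ≤
      ENNReal.ofReal (2 / (1 - k)) * ENNReal.ofReal (t ^ ((k - 1) / 2)) := by
  calc ∫⁻ s in Ioo t b, ENNReal.ofReal (s ^ ((k - 3) / 2))
      ≤ ∫⁻ s in Ioi t, ENNReal.ofReal (s ^ ((k - 3) / 2)) :=
        lintegral_mono_set Ioo_subset_Ioi_self
    _ = _ := by
        rw [lintegral_Ioi_rpow (by linarith) ht,
          ← ENNReal.ofReal_mul (div_nonneg zero_le_two (sub_pos.2 hk).le),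
          show (k - 3) / 2 + 1 = (k - 1) / 2 by ring]
        congr 1
        rw [neg_div, ← div_neg, show -((k - 1) / 2) = (1 - k) / 2 by ring, div_div_eq_mul_div]
        ring

theorem lintegral_rpow_mul_sq_lintegral_Ioo_le {k b : ℝ} (hk : k < 1) {F : ℝ → ℝ≥0∞}
    (hF : AEMeasurable F (volume.restrict (Ioo 0 b))) :
    ∫⁻ s in Ioo 0 b, ENNReal.ofReal (s ^ (k - 2)) * (∫⁻ t in Ioo 0 s, F t) ^ 2 ≤
      ENNReal.ofReal (4 / (1 - k) ^ 2) * ∫⁻ t in Ioo 0 b, ENNReal.ofReal (t ^ k) * F t ^ 2 := by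
  set K := ENNReal.ofReal (2 / (1 - k))
  set G : ℝ → ℝ≥0∞ := fun t => ENNReal.ofReal (t ^ ((k + 1) / 2)) * F t ^ 2
  have hK : K * K = ENNReal.ofReal (4 / (1 - k) ^ 2) := by
    rw [← ENNReal.ofReal_mul (div_nonneg zero_le_two (sub_pos.2 hk).le), div_mul_div_comm, sq]
    norm_num
  have hG : ∀ t ∈ Ioo 0 b, G t * (K * ENNReal.ofReal (t ^ ((k - 1) / 2))) =
      K * (ENNReal.ofReal (t ^ k) * F t ^ 2) := fun t ht => by
    have hsplit : ENNReal.ofReal (t ^ k) =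
        ENNReal.ofReal (t ^ ((k + 1) / 2)) * ENNReal.ofReal (t ^ ((k - 1) / 2)) := by
      rw [ofReal_rpow_mul_ofReal_rpow ht.1]; congr 2; ring
    simp only [G, hsplit]
    ring
  calc ∫⁻ s in Ioo 0 b, ENNReal.ofReal (s ^ (k - 2)) * (∫⁻ t in Ioo 0 s, F t) ^ 2
      ≤ ∫⁻ s in Ioo 0 b,
          K * (ENNReal.ofReal (s ^ ((k - 3) / 2)) * ∫⁻ t in Ioo 0 s, G t) :=
        setLIntegral_mono' measurableSet_Ioo fun s hs => rpow_mul_sq_lintegral_Ioo_le hk hs.1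
          (hF.mono_set (Ioo_subset_Ioo_right hs.2.le))
    _ = K * ∫⁻ t in Ioo 0 b, G t * ∫⁻ s in Ioo t b, ENNReal.ofReal (s ^ ((k - 3) / 2)) := by
        rw [lintegral_const_mul' _ _ ENNReal.ofReal_ne_top,
          lintegral_Ioo_mul_lintegral_Ioo_swap (by fun_prop) (by fun_prop)]
    _ ≤ K * ∫⁻ t in Ioo 0 b, G t * (K * ENNReal.ofReal (t ^ ((k - 1) / 2))) :=
        mul_le_mul_right (setLIntegral_mono' measurableSet_Ioo fun t ht =>
          mul_le_mul_right (lintegral_Ioo_rpow_le hk ht.1 b) _) _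
    _ = ENNReal.ofReal (4 / (1 - k) ^ 2) *
          ∫⁻ t in Ioo 0 b, ENNReal.ofReal (t ^ k) * F t ^ 2 := by
        rw [setLIntegral_congr_fun measurableSet_Ioo hG,
          lintegral_const_mul' _ _ ENNReal.ofReal_ne_top, ← mul_assoc, hK]

theorem integrable_of_integrable_mul_sq {α : Type*} [MeasurableSpace α] {μ : Measure α}
    {w f : α → ℝ} (hf : AEStronglyMeasurable f μ) (hw : ∀ᵐ x ∂μ, 0 < w x)
    (hwf : Integrable (fun x => w x * f x ^ 2) μ) (hw' : Integrable (fun x => (w x)⁻¹) μ) :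
    Integrable f μ := by
  refine ((hwf.add hw').div_const 2).mono' hf ?_
  filter_upwards [hw] with x hx
  have amgm : w x * f x ^ 2 + (w x)⁻¹ - 2 * |f x| = (w x * |f x| - 1) ^ 2 * (w x)⁻¹ := by
    field_simp
    rw [← sq_abs (f x)]
    ring
  rw [Pi.add_apply, Real.norm_eq_abs, le_div_iff₀ two_pos]
  linarith [mul_nonneg (sq_nonneg (w x * |f x| - 1)) (inv_pos.2 hx).le]

theorem integrableOn_Ioo_of_integrableOn_rpow_mul_sq {k b : ℝ} (hk : k < 1) {f : ℝ → ℝ}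
    (hf : AEStronglyMeasurable f (volume.restrict (Ioo 0 b)))
    (hw : IntegrableOn (fun t => t ^ k * f t ^ 2) (Ioo 0 b)) : IntegrableOn f (Ioo 0 b) := by
  refine integrable_of_integrable_mul_sq hf
    ((ae_restrict_iff' measurableSet_Ioo).2 <| .of_forall fun t ht =>
      Real.rpow_pos_of_pos ht.1 k)
    hw ?_
  have hinv : IntegrableOn (fun t : ℝ => t ^ (-k)) (Ioo 0 b) :=
    (intervalIntegrable_iff.1 (intervalIntegral.intervalIntegrable_rpow' (by linarith))).mono_set
      (Ioo_subset_Ioc_self.trans Ioc_subset_uIoc)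
  exact hinv.congr_fun (fun t ht => Real.rpow_neg ht.1.le k) measurableSet_Ioo

theorem integral_rpow_mul_sq_intervalIntegral_le {k b : ℝ} (hk : k < 1) {f : ℝ → ℝ}
    (hf : AEMeasurable f (volume.restrict (Ioo 0 b)))
    (hw : IntegrableOn (fun t => t ^ k * f t ^ 2) (Ioo 0 b)) :
    ∫ s in Ioo 0 b, s ^ (k - 2) * (∫ t in 0..s, f t) ^ 2 ≤
      4 / (1 - k) ^ 2 * ∫ t in Ioo 0 b, t ^ k * f t ^ 2 := by
  have hRHS : ∫⁻ t in Ioo 0 b, ENNReal.ofReal (t ^ k) * ‖f t‖ₑ ^ 2 =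
      ENNReal.ofReal (∫ t in Ioo 0 b, t ^ k * f t ^ 2) := by
    rw [ofReal_integral_eq_lintegral_ofReal hw
      ((ae_restrict_iff' measurableSet_Ioo).2 <| .of_forall fun t ht =>
        mul_nonneg (Real.rpow_nonneg ht.1.le k) (sq_nonneg _))]
    refine setLIntegral_congr_fun measurableSet_Ioo fun t ht => ?_
    rw [ENNReal.ofReal_mul (Real.rpow_nonneg ht.1.le k), ofReal_sq_eq_enorm_sq]
  have hpointwise : ∀ s ∈ Ioo 0 b, ‖s ^ (k - 2) * (∫ t in 0..s, f t) ^ 2‖ₑ ≤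
      ENNReal.ofReal (s ^ (k - 2)) * (∫⁻ t in Ioo 0 s, ‖f t‖ₑ) ^ 2 := by
    intro s hs
    rw [enorm_mul, enorm_pow, Real.enorm_eq_ofReal (Real.rpow_nonneg hs.1.le _),
      intervalIntegral.integral_of_le hs.1.le, integral_Ioc_eq_integral_Ioo]
    gcongr
    exact enorm_integral_le_lintegral_enorm _
  calc ∫ s in Ioo 0 b, s ^ (k - 2) * (∫ t in 0..s, f t) ^ 2
      ≤ (∫⁻ s in Ioo 0 b, ‖s ^ (k - 2) * (∫ t in 0..s, f t) ^ 2‖ₑ).toReal := by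
        simpa only [ofReal_norm] using (Real.le_norm_self _).trans
          (norm_integral_le_lintegral_norm _)
    _ ≤ (ENNReal.ofReal (4 / (1 - k) ^ 2) *
          ∫⁻ t in Ioo 0 b, ENNReal.ofReal (t ^ k) * ‖f t‖ₑ ^ 2).toReal := by
        refine ENNReal.toReal_mono ?_ ((setLIntegral_mono' measurableSet_Ioo hpointwise).trans
          (lintegral_rpow_mul_sq_lintegral_Ioo_le hk hf.enorm))
        rw [hRHS]
        exact ENNReal.mul_ne_top ENNReal.ofReal_ne_top ENNReal.ofReal_ne_top
    _ = 4 / (1 - k) ^ 2 * ∫ t in Ioo 0 b, t ^ k * f t ^ 2 := by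
        rw [hRHS, ENNReal.toReal_mul, ENNReal.toReal_ofReal (by positivity), ENNReal.toReal_ofReal
          (setIntegral_nonneg measurableSet_Ioo fun t ht =>
            mul_nonneg (Real.rpow_nonneg ht.1.le k) (sq_nonneg _))]

theorem exists_tendsto_nhdsGT_of_hasDerivAt_of_integrableOn {g g' : ℝ → ℝ} {a b : ℝ}
    (hab : a < b) (hder : ∀ x ∈ Ioo a b, HasDerivAt g (g' x) x)
    (hint : IntegrableOn g' (Ioo a b)) :
    ∃ L, Tendsto g (𝓝[>] a) (𝓝 L) ∧ ∀ x ∈ Ioo a b, g x - L = ∫ t in a..x, g' t := by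
  have hint' : IntegrableOn g' (Icc a b) := by rwa [integrableOn_Icc_iff_integrableOn_Ioo]
  have hii : ∀ x ∈ Icc a b, ∀ y ∈ Icc a b, IntervalIntegrable g' volume x y :=
    fun x hx y hy => (hint'.mono_set (ordConnected_Icc.uIcc_subset hx hy)).intervalIntegrable
  obtain ⟨c, hc⟩ : (Ioo a b).Nonempty := nonempty_Ioo.2 hab
  have hrepr : ∀ x ∈ Ioo a b, g x - (g c - ∫ t in a..c, g' t) = ∫ t in a..x, g' t := by
    intro x hx
    have hftc : ∫ t in c..x, g' t = g x - g c :=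
      intervalIntegral.integral_eq_sub_of_hasDerivAt
        (fun y hy => hder y (ordConnected_Ioo.uIcc_subset hc hx hy))
        (hii c (Ioo_subset_Icc_self hc) x (Ioo_subset_Icc_self hx))
    rw [← intervalIntegral.integral_interval_sub_left
      (hii a (left_mem_Icc.2 hab.le) x (Ioo_subset_Icc_self hx))
      (hii a (left_mem_Icc.2 hab.le) c (Ioo_subset_Icc_self hc))] at hftc
    linarith
  refine ⟨g c - ∫ t in a..c, g' t, ?_, hrepr⟩
  have hprim : Tendsto (fun x => ∫ t in a..x, g' t) (𝓝[>] a) (𝓝 0) := by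
    have hcont := intervalIntegral.continuousOn_primitive_interval
      (by rwa [uIcc_of_le hab.le]) a (left_mem_uIcc (b := b))
    rw [uIcc_of_le hab.le] at hcont
    rw [← nhdsWithin_Ioo_eq_nhdsGT hab]
    simpa using (hcont.mono Ioo_subset_Icc_self).tendsto
  have hg : (fun x => (g c - ∫ t in a..c, g' t) + ∫ t in a..x, g' t) =ᶠ[𝓝[>] a] g := by
    filter_upwards [Ioo_mem_nhdsGT hab] with x hx
    rw [← hrepr x hx]; ring
  simpa using (tendsto_const_nhds.add hprim).congr' hg

/-- Hardy inequality, second case (`k < 1`): for a weakly differentiable function `g` on `(0,1)`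
with `∫₀¹ s^k (g² + g'²) ds < ∞`, the trace `g(0) = lim_{s→0⁺} g(s)` exists and
`∫₀¹ s^{k-2} (g - g(0))² ds ≤ C ∫₀¹ s^k g'² ds` with `C` depending only on `k`. -/
theorem hardy_inequality_k_lt_one (k : ℝ) (hk : k < 1) :
    ∃ C : ℝ, 0 < C ∧ ∀ g g' : ℝ → ℝ,
      (∀ s ∈ Ioo (0:ℝ) 1, HasDerivAt g (g' s) s) →
      IntegrableOn (fun s => s ^ k * ((g s) ^ 2 + (g' s) ^ 2)) (Ioo (0:ℝ) 1) →
      ∃ g0 : ℝ, Filter.Tendsto g (nhdsWithin 0 (Ioi 0)) (nhds g0) ∧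
        ∫ s in Ioo (0:ℝ) 1, s ^ (k - 2) * (g s - g0) ^ 2 ≤
          C * ∫ s in Ioo (0:ℝ) 1, s ^ k * (g' s) ^ 2 := by
  refine ⟨4 / (1 - k) ^ 2, by have := sub_pos.2 hk; positivity, fun g g' hder hint => ?_⟩
  have hg'_meas : AEStronglyMeasurable g' (volume.restrict (Ioo 0 1)) :=
    (measurable_deriv g).aestronglyMeasurable.congr <| (ae_restrict_iff' measurableSet_Ioo).2 <|
      .of_forall fun s hs => (hder s hs).deriv
  have hweighted : IntegrableOn (fun s => s ^ k * g' s ^ 2) (Ioo 0 1) := by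
    refine hint.mono' (by fun_prop)
      ((ae_restrict_iff' measurableSet_Ioo).2 <| .of_forall fun s hs => ?_)
    have := Real.rpow_nonneg hs.1.le k
    rw [Real.norm_of_nonneg (by positivity)]
    nlinarith [sq_nonneg (g s)]
  obtain ⟨g0, htrace, hrepr⟩ := exists_tendsto_nhdsGT_of_hasDerivAt_of_integrableOn one_pos hder
    (integrableOn_Ioo_of_integrableOn_rpow_mul_sq hk hg'_meas hweighted)
  refine ⟨g0, htrace, ?_⟩
  calc ∫ s in Ioo 0 1, s ^ (k - 2) * (g s - g0) ^ 2
      = ∫ s in Ioo 0 1, s ^ (k - 2) * (∫ t in 0..s, g' t) ^ 2 :=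
        setIntegral_congr_fun measurableSet_Ioo fun s hs => by rw [hrepr s hs]
    _ ≤ 4 / (1 - k) ^ 2 * ∫ s in Ioo 0 1, s ^ k * g' s ^ 2 :=
        integral_rpow_mul_sq_intervalIntegral_le hk hg'_meas.aemeasurable hweighted
end

section
/- Let α > 0 and let η : ℝ³ → ℝ³ be a C² map such that the Jacobian matrix Dη(x) is invertible with J(x) = det Dη(x) > 0 for every x; set A(x) = (Dη(x))⁻¹. Then for all l, k, i ∈ {1,2,3} and every x: ∂_l ( A^k_i J^{−1/α} ) = −(1 + 1/α) J^{−1/α} A^k_i · Σ_{r,s} A^s_r ∂_l ∂_s η^r + J^{−1/α} Σ_{r,s} ( A^k_i A^s_r − A^k_r A^s_i ) ∂_l ∂_s η^r. -/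
/-- The Jacobian matrix `Dη(x) = (∂_j η^i(x))_{i j}` of a map `η : ℝ³ → ℝ³`. -/
noncomputable def Dmat (η : (Fin 3 → ℝ) → (Fin 3 → ℝ)) (x : Fin 3 → ℝ) :
    Matrix (Fin 3) (Fin 3) ℝ :=
  Matrix.of fun i j => fderiv ℝ η x (Pi.single j 1) i

/-!
Two matrix-calculus facts do all the work: Jacobi's formula `∂ det M = det M · tr (M⁻¹ ∂M)` and
`∂ (M⁻¹) = -M⁻¹ (∂M) M⁻¹`. By the product and chain rules,
`∂ (A^k_i J^p) = J^p (p A^k_i tr (A ∂Dη) - (A ∂Dη A)^k_i)`, and with `p = -1/α` the right-hand side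
of the identity is this expression with `p A^k_i tr (A ∂Dη)` split as
`-(1 + 1/α) A^k_i tr (A ∂Dη) + A^k_i tr (A ∂Dη)`.
-/

open Matrix

theorem Matrix.det_updateRow_eq_sum_adjugate_mul {n R : Type*} [Fintype n] [DecidableEq n]
    [CommRing R] (A : Matrix n n R) (r : n) (u : n → R) :
    (A.updateRow r u).det = ∑ s, A.adjugate s r * u s := by
  rw [← cramer_transpose_apply, cramer_eq_adjugate_mulVec, ← adjugate_transpose]
  rfl

theorem Matrix.adjugate_eq_det_smul_inv {n R : Type*} [Fintype n] [DecidableEq n] [CommRing R]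
    {A : Matrix n n R} (h : IsUnit A.det) : A.adjugate = A.det • A⁻¹ := by
  rw [nonsing_inv_apply _ h, smul_smul, h.mul_val_inv, one_smul]

theorem ContDiff.differentiable_fderiv_apply {𝕜 E F : Type*} [NontriviallyNormedField 𝕜]
    [NormedAddCommGroup E] [NormedSpace 𝕜 E] [NormedAddCommGroup F] [NormedSpace 𝕜 F]
    {f : E → F} (hf : ContDiff 𝕜 2 f) (v : E) : Differentiable 𝕜 fun y => fderiv 𝕜 f y v :=
  ((hf.fderiv_right (m := 1) le_rfl).differentiable one_ne_zero).clm_apply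
    (differentiable_const v)

section MatrixCalculus

variable {𝕜 : Type*} [NontriviallyNormedField 𝕜] {E : Type*} [NormedAddCommGroup E]
  [NormedSpace 𝕜 E] {n : Type*} [Fintype n] [DecidableEq n]
  {M : E → Matrix n n 𝕜} {M' : n → n → E →L[𝕜] 𝕜} {x : E}

noncomputable def Matrix.detRowContinuousMultilinear :
    ContinuousMultilinearMap 𝕜 (fun _ : n => n → 𝕜) 𝕜 where
  toMultilinearMap := (detRowAlternating : (n → 𝕜) [⋀^n]→ₗ[𝕜] 𝕜).toMultilinearMap
  cont := continuous_id.matrix_det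

theorem hasFDerivAt_det (hM : ∀ r s, HasFDerivAt (fun y => M y r s) (M' r s) x) :
    HasFDerivAt (fun y => (M y).det) (∑ r, ∑ s, (M x).adjugate s r • M' r s) x := by
  have hrow : ∀ r, HasFDerivAt (fun y => M y r) (ContinuousLinearMap.pi (M' r)) x :=
    fun r => hasFDerivAt_pi.2 (hM r)
  refine (HasFDerivAt.multilinear_comp (f := detRowContinuousMultilinear) hrow).congr_fderiv ?_
  ext v
  simp only [_root_.sum_apply, ContinuousLinearMap.comp_apply,
    ContinuousMultilinearMap.toContinuousLinearMap_apply, _root_.smul_apply, smul_eq_mul]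
  exact Fintype.sum_congr _ _ fun r => (M x).det_updateRow_eq_sum_adjugate_mul r _

section LinftyOpNorm

/- Any submultiplicative norm would do: it only serves to make `Matrix n n 𝕜` a complete normed
algebra, in which `Ring.inverse` has derivative `H ↦ -M⁻¹ H M⁻¹`. -/
attribute [local instance] Matrix.linftyOpNormedRing Matrix.linftyOpNormedAlgebra

theorem hasFDerivAt_matrix_of_entries (hM : ∀ r s, HasFDerivAt (fun y => M y r s) (M' r s) x) :
    HasFDerivAt M (∑ r, ∑ s, (M' r s).smulRight (single r s 1)) x := by
  have hsum : M = fun y => ∑ r, ∑ s, M y r s • single r s (1 : 𝕜) := by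
    funext y
    simpa only [smul_single, smul_eq_mul, mul_one] using matrix_eq_sum_single (M y)
  rw [hsum]
  exact .fun_sum fun r _ => .fun_sum fun s _ => (hM r s).smul_const _

theorem hasFDerivAt_inv_apply [CompleteSpace 𝕜]
    (hM : ∀ r s, HasFDerivAt (fun y => M y r s) (M' r s) x) (hdet : IsUnit (M x).det) (k i : n) :
    HasFDerivAt (fun y => (M y)⁻¹ k i) (-∑ r, ∑ s, ((M x)⁻¹ k r * (M x)⁻¹ s i) • M' r s) x := by
  -- Instance search only finds completeness for the product uniformity, which is the operator
  -- norm's uniformity up to unfolding, not syntactically.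
  have : HasSummableGeomSeries (Matrix n n 𝕜) :=
    @instHasSummableGeomSeriesOfCompleteSpace _ _ (FiniteDimensional.complete 𝕜 _)
  obtain ⟨u, hu⟩ := (isUnit_iff_isUnit_det _).2 hdet
  have hring := hasFDerivAt_ringInverse (𝕜 := 𝕜) u
  rw [coe_units_inv, hu] at hring
  have hentry := (entryLinearMap 𝕜 𝕜 k i).toContinuousLinearMap.hasFDerivAt.comp x
    (hring.comp x (hasFDerivAt_matrix_of_entries hM))
  simp only [Function.comp_def, ← nonsing_inv_eq_ringInverse] at hentry
  refine hentry.congr_fderiv ?_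
  ext v
  have hL : (∑ r, ∑ s, (M' r s).smulRight (single r s (1 : 𝕜))) v = of fun r s => M' r s v := by
    ext a b
    simp [Matrix.sum_apply, single_apply, ite_and]
  change -((M x)⁻¹ * (∑ r, ∑ s, (M' r s).smulRight (single r s (1 : 𝕜))) v * (M x)⁻¹) k i = _
  simp only [hL, _root_.neg_apply, mul_apply, of_apply, _root_.sum_apply,
    _root_.smul_apply, smul_eq_mul, Finset.sum_mul]
  rw [Finset.sum_comm]
  exact congrArg Neg.neg <| Fintype.sum_congr _ _ fun r => Fintype.sum_congr _ _ fun s =>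
    mul_right_comm _ _ _

end LinftyOpNorm

end MatrixCalculus

section RealMatrixCalculus

variable {E : Type*} [NormedAddCommGroup E] [NormedSpace ℝ E] {n : Type*} [Fintype n]
  [DecidableEq n] {M : E → Matrix n n ℝ} {M' : n → n → E →L[ℝ] ℝ} {x : E}

theorem hasFDerivAt_det_rpow (hM : ∀ r s, HasFDerivAt (fun y => M y r s) (M' r s) x)
    (hdet : (M x).det ≠ 0) (p : ℝ) :
    HasFDerivAt (fun y => (M y).det ^ p)
      ((p * (M x).det ^ p) • ∑ r, ∑ s, (M x)⁻¹ s r • M' r s) x := by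
  convert (hasFDerivAt_det hM).rpow_const (p := p) (Or.inl hdet) using 1
  have hadj : ∑ r, ∑ s, (M x).adjugate s r • M' r s =
      (M x).det • ∑ r, ∑ s, (M x)⁻¹ s r • M' r s := by
    simp only [adjugate_eq_det_smul_inv hdet.isUnit, Matrix.smul_apply, smul_eq_mul, mul_smul,
      Finset.smul_sum]
  rw [hadj, smul_smul, mul_assoc, Real.rpow_sub_one hdet, div_mul_cancel₀ _ hdet]

theorem hasFDerivAt_inv_apply_mul_det_rpow
    (hM : ∀ r s, HasFDerivAt (fun y => M y r s) (M' r s) x) (hdet : (M x).det ≠ 0)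
    (p : ℝ) (k i : n) :
    HasFDerivAt (fun y => (M y)⁻¹ k i * (M y).det ^ p)
      ((M x).det ^ p • ((p * (M x)⁻¹ k i) • ∑ r, ∑ s, (M x)⁻¹ s r • M' r s
        - ∑ r, ∑ s, ((M x)⁻¹ k r * (M x)⁻¹ s i) • M' r s)) x :=
  ((hasFDerivAt_inv_apply hM hdet.isUnit k i).mul (hasFDerivAt_det_rpow hM hdet p)).congr_fderiv
    (by module)

end RealMatrixCalculus

theorem structure_identity_first_order_general (α : ℝ)
    (η : (Fin 3 → ℝ) → (Fin 3 → ℝ)) (hη : ContDiff ℝ 2 η)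
    (hJ : ∀ x, 0 < (Dmat η x).det) :
    ∀ l k i : Fin 3, ∀ x : Fin 3 → ℝ,
      fderiv ℝ (fun y => (Dmat η y)⁻¹ k i * (Dmat η y).det ^ (-(1/α))) x (Pi.single l 1) =
        -(1 + 1/α) * (Dmat η x).det ^ (-(1/α)) * (Dmat η x)⁻¹ k i *
            (∑ r : Fin 3, ∑ s : Fin 3, (Dmat η x)⁻¹ s r *
              fderiv ℝ (fun y => fderiv ℝ η y (Pi.single s 1) r) x (Pi.single l 1))
          + (Dmat η x).det ^ (-(1/α)) *
            ∑ r : Fin 3, ∑ s : Fin 3,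
              ((Dmat η x)⁻¹ k i * (Dmat η x)⁻¹ s r - (Dmat η x)⁻¹ k r * (Dmat η x)⁻¹ s i) *
                fderiv ℝ (fun y => fderiv ℝ η y (Pi.single s 1) r) x (Pi.single l 1) := by
  intro l k i x
  have hM : ∀ r s, HasFDerivAt (fun y => Dmat η y r s)
      (fderiv ℝ (fun y => fderiv ℝ η y (Pi.single s 1) r) x) x := fun r s =>
    (differentiable_pi.1 (hη.differentiable_fderiv_apply _) r x).hasFDerivAt
  rw [(hasFDerivAt_inv_apply_mul_det_rpow hM (hJ x).ne' _ k i).fderiv]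
  simp only [_root_.smul_apply, _root_.sub_apply, _root_.sum_apply, smul_eq_mul]
  have hsplit : ∀ (A : Matrix (Fin 3) (Fin 3) ℝ) (D : Fin 3 → Fin 3 → ℝ),
      ∑ r, ∑ s, (A k i * A s r - A k r * A s i) * D r s =
        A k i * ∑ r, ∑ s, A s r * D r s - ∑ r, ∑ s, A k r * A s i * D r s := by
    intro A D
    simp only [sub_mul, Finset.sum_sub_distrib, Finset.mul_sum, mul_assoc]
  rw [hsplit]
  ring

/-- First-order structure identity (3.17) isolating the divergence part:
for `η : ℝ³ → ℝ³` of class `C²` with `J = det Dη > 0` and `A = (Dη)⁻¹`,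
`∂_l (A^k_i J^{-1/α}) = -(1+1/α) J^{-1/α} A^k_i Σ_{r,s} A^s_r ∂_l∂_s η^r
  + J^{-1/α} Σ_{r,s} (A^k_i A^s_r - A^k_r A^s_i) ∂_l∂_s η^r`. -/
theorem structure_identity_first_order (α : ℝ) (hα : 0 < α)
    (η : (Fin 3 → ℝ) → (Fin 3 → ℝ)) (hη : ContDiff ℝ 2 η)
    (hJ : ∀ x, 0 < (Dmat η x).det) :
    ∀ l k i : Fin 3, ∀ x : Fin 3 → ℝ,
      fderiv ℝ (fun y => (Dmat η y)⁻¹ k i * (Dmat η y).det ^ (-(1/α))) x (Pi.single l 1) =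
        -(1 + 1/α) * (Dmat η x).det ^ (-(1/α)) * (Dmat η x)⁻¹ k i *
            (∑ r : Fin 3, ∑ s : Fin 3, (Dmat η x)⁻¹ s r *
              fderiv ℝ (fun y => fderiv ℝ η y (Pi.single s 1) r) x (Pi.single l 1))
          + (Dmat η x).det ^ (-(1/α)) *
            ∑ r : Fin 3, ∑ s : Fin 3,
              ((Dmat η x)⁻¹ k i * (Dmat η x)⁻¹ s r - (Dmat η x)⁻¹ k r * (Dmat η x)⁻¹ s i) *
                fderiv ℝ (fun y => fderiv ℝ η y (Pi.single s 1) r) x (Pi.single l 1) :=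
  structure_identity_first_order_general α η hη hJ
end

section
/- Let α > 0 and let η : ℝ³ → ℝ³ be a C³ map such that the Jacobian matrix Dη(x) is invertible with J(x) = det Dη(x) > 0 for every x; set A(x) = (Dη(x))⁻¹. Then for all l, i ∈ {1,2,3} and every x: Σ_k ∂_l ∂_k ( A^k_i J^{−1/α} ) = −(1 + 1/α) Σ_k ∂_k ( J^{−1/α} A^k_i Σ_{r,s} A^s_r ∂_l ∂_s η^r ) + Σ_{k,r,s} ∂_k ( J^{−1/α} ( A^k_i A^s_r − A^k_r A^s_i ) ) ∂_l ∂_s η^r. -/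
open Matrix

namespace Matrix

variable {ι : Type*} [Fintype ι] [DecidableEq ι]

theorem det_updateRow_eq_sum_mul_adjugate {R : Type*} [CommRing R] (A : Matrix ι ι R) (r : ι)
    (u : ι → R) : (A.updateRow r u).det = ∑ s, u s * A.adjugate s r := by
  rw [det_eq_sum_mul_adjugate_row _ r]
  refine Finset.sum_congr rfl fun s _ => ?_
  rw [adjugate_apply, adjugate_apply, updateRow_idem, updateRow_self]

theorem inv_apply_eq_inv_det_mul_adjugate {K : Type*} [Field K] (A : Matrix ι ι K) (k m : ι) :
    A⁻¹ k m = (A.det)⁻¹ * A.adjugate k m := by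
  rw [inv_def, smul_apply, Ring.inverse_eq_inv', smul_eq_mul]

theorem adjugate_eq_det_smul_inv_s16 {K : Type*} [Field K] (A : Matrix ι ι K) (hA : A.det ≠ 0) :
    A.adjugate = A.det • A⁻¹ := by
  rw [inv_def, smul_smul, Ring.mul_inverse_cancel _ (isUnit_iff_ne_zero.2 hA), one_smul]

noncomputable def detContinuousMultilinearMap :
    ContinuousMultilinearMap ℝ (fun _ : ι => ι → ℝ) ℝ :=
  { toMultilinearMap := (detRowAlternating : (ι → ℝ) [⋀^ι]→ₗ[ℝ] ℝ).toMultilinearMap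
    cont := continuous_id.matrix_det }

end Matrix

section MatrixCalculus

variable {E : Type*} [NormedAddCommGroup E] [NormedSpace ℝ E]
  {ι : Type*} [Fintype ι] {M N : E → Matrix ι ι ℝ} {x : E}

/-- `∂_v M(x)`, taken entrywise since `Matrix` carries no global norm. -/
noncomputable def matrixFDeriv (M : E → Matrix ι ι ℝ) (x v : E) : Matrix ι ι ℝ :=
  of fun r s => fderiv ℝ (fun y => M y r s) x v

theorem matrixFDeriv_mul (hM : ∀ r s, DifferentiableAt ℝ (fun y => M y r s) x)
    (hN : ∀ r s, DifferentiableAt ℝ (fun y => N y r s) x) (v : E) :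
    matrixFDeriv (fun y => M y * N y) x v =
      matrixFDeriv M x v * N x + M x * matrixFDeriv N x v := by
  ext r s
  have hrs := HasFDerivAt.fun_sum (u := Finset.univ)
    fun j _ => (hM r j).hasFDerivAt.fun_mul (hN j s).hasFDerivAt
  simp only [matrixFDeriv, mul_apply, of_apply, Matrix.add_apply, hrs.fderiv]
  simp [_root_.sum_apply, Finset.sum_add_distrib, mul_comm, add_comm]

variable [DecidableEq ι]

theorem hasFDerivAt_matrix_det {M' : ι → ι → E →L[ℝ] ℝ}
    (h : ∀ r s, HasFDerivAt (fun y => M y r s) (M' r s) x) :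
    HasFDerivAt (fun y => (M y).det) (∑ r, ∑ s, (M x).adjugate s r • M' r s) x := by
  have hM : HasFDerivAt (fun y => of.symm (M y)) (.pi fun r => .pi fun s => M' r s) x :=
    hasFDerivAt_pi.2 fun r => hasFDerivAt_pi.2 fun s => h r s
  refine ((detContinuousMultilinearMap (ι := ι)).hasFDerivAt (of.symm (M x)) |>.comp x hM)
    |>.congr_fderiv ?_
  ext v
  simp only [ContinuousLinearMap.comp_apply, ContinuousLinearMap.coe_pi',
    ContinuousMultilinearMap.linearDeriv_apply, _root_.sum_apply, _root_.smul_apply, smul_eq_mul]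
  refine Finset.sum_congr rfl fun r _ => ?_
  simp_rw [mul_comm ((M x).adjugate _ r)]
  exact (M x).det_updateRow_eq_sum_mul_adjugate r _

theorem differentiableAt_matrix_det (h : ∀ r s, DifferentiableAt ℝ (fun y => M y r s) x) :
    DifferentiableAt ℝ (fun y => (M y).det) x :=
  (hasFDerivAt_matrix_det fun r s => (h r s).hasFDerivAt).differentiableAt

theorem fderiv_matrix_det_apply (h : ∀ r s, DifferentiableAt ℝ (fun y => M y r s) x) (v : E) :
    fderiv ℝ (fun y => (M y).det) x v = ((M x).adjugate * matrixFDeriv M x v).trace := by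
  rw [(hasFDerivAt_matrix_det fun r s => (h r s).hasFDerivAt).fderiv]
  simp only [_root_.sum_apply, _root_.smul_apply, smul_eq_mul, trace, matrixFDeriv, diag_apply,
    mul_apply, of_apply]
  exact Finset.sum_comm

theorem differentiableAt_matrix_inv_apply (h : ∀ r s, DifferentiableAt ℝ (fun y => M y r s) x)
    (hx : (M x).det ≠ 0) (k m : ι) : DifferentiableAt ℝ (fun y => (M y)⁻¹ k m) x := by
  have hadj : DifferentiableAt ℝ (fun y => (M y).adjugate k m) x := by
    simp only [adjugate_apply]
    refine differentiableAt_matrix_det fun r s => ?_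
    simp only [updateRow_apply]
    split_ifs
    exacts [differentiableAt_const _, h r s]
  simp only [inv_apply_eq_inv_det_mul_adjugate]
  exact ((differentiableAt_matrix_det h).inv hx).mul hadj

theorem contDiffAt_matrix_det {n : WithTop ℕ∞}
    (h : ∀ r s, ContDiffAt ℝ n (fun y => M y r s) x) :
    ContDiffAt ℝ n (fun y => (M y).det) x := by
  simp only [det_apply']
  fun_prop

theorem contDiffAt_matrix_inv_apply {n : WithTop ℕ∞}
    (h : ∀ r s, ContDiffAt ℝ n (fun y => M y r s) x) (hx : (M x).det ≠ 0) (k m : ι) :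
    ContDiffAt ℝ n (fun y => (M y)⁻¹ k m) x := by
  have hadj : ContDiffAt ℝ n (fun y => (M y).adjugate k m) x := by
    simp only [adjugate_apply]
    refine contDiffAt_matrix_det fun r s => ?_
    simp only [updateRow_apply]
    split_ifs
    exacts [contDiffAt_const, h r s]
  simp only [inv_apply_eq_inv_det_mul_adjugate]
  exact ((contDiffAt_matrix_det h).inv hx).mul hadj

theorem matrixFDeriv_inv (h : ∀ r s, DifferentiableAt ℝ (fun y => M y r s) x)
    (hx : (M x).det ≠ 0) (v : E) :
    matrixFDeriv (fun y => (M y)⁻¹) x v = -((M x)⁻¹ * matrixFDeriv M x v * (M x)⁻¹) := by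
  have hinv_mul : (fun y => (M y)⁻¹ * M y) =ᶠ[nhds x] fun _ => 1 := by
    filter_upwards [(differentiableAt_matrix_det h).continuousAt.eventually_ne hx] with y hy
    exact nonsing_inv_mul _ (isUnit_iff_ne_zero.2 hy)
  have hprod :
      matrixFDeriv (fun y => (M y)⁻¹) x v * M x + (M x)⁻¹ * matrixFDeriv M x v = 0 := by
    rw [← matrixFDeriv_mul (differentiableAt_matrix_inv_apply h hx) h]
    ext r s
    have hrs : (fun y => ((M y)⁻¹ * M y) r s) =ᶠ[nhds x] fun _ => (1 : Matrix ι ι ℝ) r s :=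
      hinv_mul.mono fun y hy => congrFun (congrFun hy r) s
    simp [matrixFDeriv, hrs.fderiv_eq]
  calc matrixFDeriv (fun y => (M y)⁻¹) x v
      = matrixFDeriv (fun y => (M y)⁻¹) x v * M x * (M x)⁻¹ := by
        rw [Matrix.mul_assoc, mul_nonsing_inv _ (isUnit_iff_ne_zero.2 hx), Matrix.mul_one]
    _ = -((M x)⁻¹ * matrixFDeriv M x v * (M x)⁻¹) := by
        rw [eq_neg_of_add_eq_zero_left hprod, Matrix.neg_mul]

theorem fderiv_matrix_det_rpow_apply (h : ∀ r s, DifferentiableAt ℝ (fun y => M y r s) x)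
    (hx : 0 < (M x).det) (c : ℝ) (v : E) :
    fderiv ℝ (fun y => (M y).det ^ c) x v =
      c * (M x).det ^ c * ((M x)⁻¹ * matrixFDeriv M x v).trace := by
  rw [((differentiableAt_matrix_det h).hasFDerivAt.rpow_const (Or.inl hx.ne')).fderiv,
    _root_.smul_apply, smul_eq_mul, fderiv_matrix_det_apply h, adjugate_eq_det_smul_inv_s16 _ hx.ne',
    Matrix.smul_mul, trace_smul, smul_eq_mul, Real.rpow_sub_one hx.ne']
  field_simp

theorem fderiv_matrix_inv_mul_det_rpow_apply
    (h : ∀ r s, DifferentiableAt ℝ (fun y => M y r s) x) (hx : 0 < (M x).det) (c : ℝ) (v : E)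
    (k i : ι) :
    fderiv ℝ (fun y => (M y)⁻¹ k i * (M y).det ^ c) x v =
      (c - 1) * ((M x).det ^ c * (M x)⁻¹ k i *
          ∑ r, ∑ s, (M x)⁻¹ s r * fderiv ℝ (fun y => M y r s) x v)
        + ∑ r, ∑ s, (M x).det ^ c *
            ((M x)⁻¹ k i * (M x)⁻¹ s r - (M x)⁻¹ k r * (M x)⁻¹ s i) *
              fderiv ℝ (fun y => M y r s) x v := by
  rw [fderiv_fun_mul (differentiableAt_matrix_inv_apply h hx.ne' k i)
      ((differentiableAt_matrix_det h).rpow_const (Or.inl hx.ne')), _root_.add_apply,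
    _root_.smul_apply, _root_.smul_apply, smul_eq_mul, smul_eq_mul,
    fderiv_matrix_det_rpow_apply h hx]
  set A := (M x)⁻¹
  set dM := matrixFDeriv M x v
  have hinv : fderiv ℝ (fun y => (M y)⁻¹ k i) x v = -(A * dM * A) k i :=
    congrFun (congrFun (matrixFDeriv_inv h hx.ne' v) k) i
  have htrace : (A * dM).trace = ∑ r, ∑ s, A s r * dM r s := by
    simp only [trace, diag_apply, mul_apply]
    exact Finset.sum_comm
  have hsandwich : (A * dM * A) k i = ∑ r, ∑ s, (A k r * A s i) * dM r s := by
    simp only [mul_apply, Finset.sum_mul]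
    rw [Finset.sum_comm]
    exact Finset.sum_congr rfl fun r _ => Finset.sum_congr rfl fun s _ => by ring
  rw [hinv, htrace, hsandwich]
  simp only [dM, matrixFDeriv, of_apply, mul_sub, sub_mul, Finset.sum_sub_distrib, mul_assoc,
    ← Finset.mul_sum]
  ring

end MatrixCalculus

section Schwarz

variable {E F : Type*} [NormedAddCommGroup E] [NormedSpace ℝ E] [NormedAddCommGroup F]
  [NormedSpace ℝ F]

theorem fderiv_fderiv_apply_comm {f : E → F} {x : E} (hf : ContDiffAt ℝ 2 f x) (v w : E) :
    fderiv ℝ (fun y => fderiv ℝ f y v) x w = fderiv ℝ (fun y => fderiv ℝ f y w) x v := by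
  have hd : DifferentiableAt ℝ (fderiv ℝ f) x :=
    (hf.fderiv_right (m := 1) le_rfl).differentiableAt one_ne_zero
  have happly :
      ∀ u, fderiv ℝ (fun y => fderiv ℝ f y u) x = (fderiv ℝ (fderiv ℝ f) x).flip u := by
    intro u
    rw [fderiv_clm_apply hd (differentiableAt_const u)]
    simp
  rw [happly v, happly w, ContinuousLinearMap.flip_apply, ContinuousLinearMap.flip_apply]
  exact hf.isSymmSndFDerivAt (by simp) w v

theorem fderiv_fderiv_fderiv_apply_comm {f : E → F} (hf : ContDiff ℝ 3 f) (x u v w : E) :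
    fderiv ℝ (fun y => fderiv ℝ (fun z => fderiv ℝ f z v) y w) x u =
      fderiv ℝ (fun y => fderiv ℝ (fun z => fderiv ℝ f z u) y w) x v := by
  have hsymm : ∀ a b, (fun y => fderiv ℝ (fun z => fderiv ℝ f z a) y b) =
      fun y => fderiv ℝ (fun z => fderiv ℝ f z b) y a := fun a b =>
    funext fun y => fderiv_fderiv_apply_comm (hf.of_le (by norm_num)).contDiffAt a b
  have hf' : ContDiff ℝ 2 (fun z => fderiv ℝ f z w) :=
    (hf.fderiv_right (m := 2) le_rfl).clm_apply contDiff_const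
  rw [hsymm v w, hsymm u w]
  exact fderiv_fderiv_apply_comm hf'.contDiffAt v u

theorem fderiv_fderiv_fderiv_apply_apply_comm {ι : Type*} [Fintype ι] {η : E → ι → ℝ}
    (hη : ContDiff ℝ 3 η) (r : ι) (x u v w : E) :
    fderiv ℝ (fun y => fderiv ℝ (fun z => fderiv ℝ η z v r) y w) x u =
      fderiv ℝ (fun y => fderiv ℝ (fun z => fderiv ℝ η z u r) y w) x v := by
  have hcomponent :
      ∀ a, (fun z => fderiv ℝ η z a r) = fun z => fderiv ℝ (fun z => η z r) z a :=
    fun a => funext fun z => by rw [fderiv_apply (hη.differentiable (by norm_num) z) r]; rfl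
  rw [hcomponent, hcomponent]
  exact fderiv_fderiv_fderiv_apply_comm (contDiff_pi.1 hη r) x u v w

end Schwarz

theorem fderiv_fderiv_matrix_inv_mul_det_rpow_apply {E ι : Type*} [NormedAddCommGroup E]
    [NormedSpace ℝ E] [Fintype ι] [DecidableEq ι] {M : E → Matrix ι ι ℝ}
    (hM : ∀ r s, ContDiff ℝ 2 (fun y => M y r s)) (hdet : ∀ y, 0 < (M y).det) (c : ℝ)
    (k i : ι) (x u v : E) :
    fderiv ℝ (fun y => fderiv ℝ (fun z => (M z)⁻¹ k i * (M z).det ^ c) y u) x v =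
      (c - 1) * fderiv ℝ (fun y => (M y).det ^ c * (M y)⁻¹ k i *
          ∑ r, ∑ s, (M y)⁻¹ s r * fderiv ℝ (fun z => M z r s) y v) x u
        + ∑ r, ∑ s, (fderiv ℝ (fun y => (M y).det ^ c *
            ((M y)⁻¹ k i * (M y)⁻¹ s r - (M y)⁻¹ k r * (M y)⁻¹ s i)) x u *
            fderiv ℝ (fun z => M z r s) x v
          + (M x).det ^ c * ((M x)⁻¹ k i * (M x)⁻¹ s r - (M x)⁻¹ k r * (M x)⁻¹ s i) *
            fderiv ℝ (fun y => fderiv ℝ (fun z => M z r s) y v) x u) := by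
  have hA : ∀ k m, ContDiff ℝ 2 (fun y => (M y)⁻¹ k m) := fun k m =>
    contDiff_iff_contDiffAt.2 fun y =>
      contDiffAt_matrix_inv_apply (fun r s => (hM r s).contDiffAt) (hdet y).ne' k m
  have hJ : ContDiff ℝ 2 (fun y => (M y).det ^ c) :=
    contDiff_iff_contDiffAt.2 fun y =>
      (contDiffAt_matrix_det fun r s => (hM r s).contDiffAt).rpow_const_of_ne (hdet y).ne'
  have hAd : ∀ k m, Differentiable ℝ (fun y => (M y)⁻¹ k m) := fun k m =>
    (hA k m).differentiable (by norm_num)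
  have hJd : Differentiable ℝ (fun y => (M y).det ^ c) := hJ.differentiable (by norm_num)
  have hHd : ∀ r s, Differentiable ℝ (fun y => fderiv ℝ (fun z => M z r s) y v) := fun r s =>
    (((hM r s).fderiv_right (m := 1) (by norm_num)).clm_apply contDiff_const).differentiable
      one_ne_zero
  have hG : DifferentiableAt ℝ (fun y => (M y).det ^ c * (M y)⁻¹ k i *
      ∑ r, ∑ s, (M y)⁻¹ s r * fderiv ℝ (fun z => M z r s) y v) x :=
    ((hJd x).mul (hAd k i x)).mul (DifferentiableAt.fun_sum fun r _ =>
      DifferentiableAt.fun_sum fun s _ => (hAd s r x).mul (hHd r s x))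
  have hQ : ∀ r s, DifferentiableAt ℝ (fun y => (M y).det ^ c *
      ((M y)⁻¹ k i * (M y)⁻¹ s r - (M y)⁻¹ k r * (M y)⁻¹ s i)) x := fun r s =>
    (hJd x).mul (((hAd k i x).mul (hAd s r x)).sub ((hAd k r x).mul (hAd s i x)))
  rw [fderiv_fderiv_apply_comm ((hA k i).mul hJ).contDiffAt u v]
  simp only [fun y => fderiv_matrix_inv_mul_det_rpow_apply
    (fun r s => (hM r s).differentiable (by norm_num) y) (hdet y) c v k i]
  have hderiv := (hG.hasFDerivAt.const_mul (c - 1)).fun_add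
    (HasFDerivAt.fun_sum (u := .univ) fun r _ => HasFDerivAt.fun_sum (u := .univ) fun s _ =>
      (hQ r s).hasFDerivAt.fun_mul (hHd r s x).hasFDerivAt)
  rw [hderiv.fderiv]
  simp only [_root_.add_apply, _root_.smul_apply, smul_eq_mul, _root_.sum_apply, add_right_inj]
  exact Finset.sum_congr rfl fun r _ => Finset.sum_congr rfl fun s _ => by ring

theorem sum_sum_mul_eq_zero_of_antisymm_of_symm {ι R : Type*} [Fintype ι] [CommRing R]
    [NoZeroDivisors R] [CharZero R] (Q T : ι → ι → R) (hQ : ∀ a b, Q b a = -Q a b)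
    (hT : ∀ a b, T b a = T a b) : ∑ a, ∑ b, Q a b * T a b = 0 := by
  refine self_eq_neg.mp ?_
  calc ∑ a, ∑ b, Q a b * T a b
      = ∑ a, ∑ b, Q b a * T b a := Finset.sum_comm
    _ = -∑ a, ∑ b, Q a b * T a b := by
        simp only [← Finset.sum_neg_distrib]
        exact Finset.sum_congr rfl fun a _ => Finset.sum_congr rfl fun b _ => by
          rw [hQ, hT, neg_mul]

theorem structure_identity_second_order_general (α : ℝ)
    (η : (Fin 3 → ℝ) → (Fin 3 → ℝ)) (hη : ContDiff ℝ 3 η)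
    (hJ : ∀ x, 0 < (Dmat η x).det) :
    ∀ l i : Fin 3, ∀ x : Fin 3 → ℝ,
      ∑ k : Fin 3,
        fderiv ℝ (fun y =>
            fderiv ℝ (fun z => (Dmat η z)⁻¹ k i * (Dmat η z).det ^ (-(1/α)))
              y (Pi.single k 1))
          x (Pi.single l 1) =
      -(1 + 1/α) *
          ∑ k : Fin 3,
            fderiv ℝ (fun y => (Dmat η y).det ^ (-(1/α)) * (Dmat η y)⁻¹ k i *
                ∑ r : Fin 3, ∑ s : Fin 3, (Dmat η y)⁻¹ s r *
                  fderiv ℝ (fun z => fderiv ℝ η z (Pi.single s 1) r) y (Pi.single l 1))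
              x (Pi.single k 1)
        + ∑ k : Fin 3, ∑ r : Fin 3, ∑ s : Fin 3,
            fderiv ℝ (fun y => (Dmat η y).det ^ (-(1/α)) *
                ((Dmat η y)⁻¹ k i * (Dmat η y)⁻¹ s r - (Dmat η y)⁻¹ k r * (Dmat η y)⁻¹ s i))
              x (Pi.single k 1) *
            fderiv ℝ (fun z => fderiv ℝ η z (Pi.single s 1) r) x (Pi.single l 1) := by
  intro l i x
  have hD : ∀ r s, ContDiff ℝ 2 (fun z => Dmat η z r s) := fun r s =>
    contDiff_pi.1 ((hη.fderiv_right (m := 2) le_rfl).clm_apply contDiff_const) r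
  have hthird : ∑ k, ∑ r, ∑ s, (Dmat η x).det ^ (-(1/α)) *
      ((Dmat η x)⁻¹ k i * (Dmat η x)⁻¹ s r - (Dmat η x)⁻¹ k r * (Dmat η x)⁻¹ s i) *
      fderiv ℝ (fun y => fderiv ℝ (fun z => Dmat η z r s) y (Pi.single l 1)) x (Pi.single k 1)
      = 0 := by
    rw [Finset.sum_comm]
    exact Finset.sum_eq_zero fun r _ => sum_sum_mul_eq_zero_of_antisymm_of_symm _ _
      (fun k s => by ring) (fun k s => fderiv_fderiv_fderiv_apply_apply_comm hη r x _ _ _)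
  rw [Finset.sum_congr rfl fun k _ =>
    fderiv_fderiv_matrix_inv_mul_det_rpow_apply hD hJ (-(1/α)) k i x _ _]
  simp only [Finset.sum_add_distrib, ← Finset.mul_sum]
  rw [hthird, add_zero, show -(1/α) - 1 = -(1 + 1/α) by ring]
  -- what remains differs only by unfolding `Dmat η z r s` to `fderiv ℝ η z (Pi.single s 1) r`
  rfl

/-- Second-order structure identity (3.18): for `η : ℝ³ → ℝ³` of class `C³` with
`J = det Dη > 0` and `A = (Dη)⁻¹`,
`Σ_k ∂_l∂_k (A^k_i J^{-1/α}) = -(1+1/α) Σ_k ∂_k (J^{-1/α} A^k_i Σ_{r,s} A^s_r ∂_l∂_s η^r)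
  + Σ_{k,r,s} ∂_k (J^{-1/α} (A^k_i A^s_r - A^k_r A^s_i)) ∂_l∂_s η^r`. -/
theorem structure_identity_second_order (α : ℝ) (hα : 0 < α)
    (η : (Fin 3 → ℝ) → (Fin 3 → ℝ)) (hη : ContDiff ℝ 3 η)
    (hJ : ∀ x, 0 < (Dmat η x).det) :
    ∀ l i : Fin 3, ∀ x : Fin 3 → ℝ,
      ∑ k : Fin 3,
        fderiv ℝ (fun y =>
            fderiv ℝ (fun z => (Dmat η z)⁻¹ k i * (Dmat η z).det ^ (-(1/α)))
              y (Pi.single k 1))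
          x (Pi.single l 1) =
      -(1 + 1/α) *
          ∑ k : Fin 3,
            fderiv ℝ (fun y => (Dmat η y).det ^ (-(1/α)) * (Dmat η y)⁻¹ k i *
                ∑ r : Fin 3, ∑ s : Fin 3, (Dmat η y)⁻¹ s r *
                  fderiv ℝ (fun z => fderiv ℝ η z (Pi.single s 1) r) y (Pi.single l 1))
              x (Pi.single k 1)
        + ∑ k : Fin 3, ∑ r : Fin 3, ∑ s : Fin 3,
            fderiv ℝ (fun y => (Dmat η y).det ^ (-(1/α)) *
                ((Dmat η y)⁻¹ k i * (Dmat η y)⁻¹ s r - (Dmat η y)⁻¹ k r * (Dmat η y)⁻¹ s i))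
              x (Pi.single k 1) *
            fderiv ℝ (fun z => fderiv ℝ η z (Pi.single s 1) r) x (Pi.single l 1) :=
  structure_identity_second_order_general α η hη hJ
end
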